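/- arXiv:2501.00991 — 2 statements merged into one kernel-verified Lean document; each statement's English description precedes it below -/
import Mathlib

section
/- Let G be a graph with a 1-contraction sequence G_n, …, G_1. Then there exist a realiser (σ, τ) of G and, for each i, an injection r_i : V(G_i) → V(G) with r_i(x) belonging to the part of x for every vertex x of G_i, such that: (i) the map x ↦ r_i(x) is an isomorphism from the underlying graph of G_i onto the subgraph of G induced by r_i(V(G_i)); (ii) for every i > 1, the two vertices u, v of G_i contracted to form G_{i-1} are consecutive for the induced realiser, i.e., no representative r_i(w) of a third vertex w of G_i lies strictly between r_i(u) and r_i(v) in σ, or no such representative lies strictly between them in τ; and (iii) for every red edge xy of G_i, the vertices x and y are consecutive for the induced realiser in the same sense. -/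
open Finset

/-- Two vertex sets are *homogeneous* in `G` if they are complete or anticomplete
to each other. A red edge of a trigraph in a contraction sequence joins two parts
that are not homogeneous. -/
def Homogeneous {V : Type*} (G : SimpleGraph V) (X Y : Finset V) : Prop :=
  (∀ x ∈ X, ∀ y ∈ Y, G.Adj x y) ∨ (∀ x ∈ X, ∀ y ∈ Y, ¬ G.Adj x y)

/-- A contraction sequence of a graph on vertex type `V` (with `n = Fintype.card V`),
encoded by the partitions of `V` into the parts of the trigraphs `G_n, …, G_1`:
`parts i` is the partition whose blocks are the parts of the vertices of `G_i`.
`G_n` is the discrete partition, and `G_i` is obtained from `G_{i+1}` by merging two parts. -/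
structure ContractionSeq (V : Type*) [Fintype V] [DecidableEq V] where
  parts : ℕ → Finpartition (Finset.univ : Finset V)
  parts_card : ∀ i, 1 ≤ i → i ≤ Fintype.card V → (parts i).parts.card = i
  parts_top : ∀ X ∈ (parts (Fintype.card V)).parts, X.card = 1
  merge : ∀ i, 1 ≤ i → i < Fintype.card V →
    ∃ X ∈ (parts (i + 1)).parts, ∃ Y ∈ (parts (i + 1)).parts, X ≠ Y ∧
      (parts i).parts = insert (X ∪ Y) ((((parts (i + 1)).parts).erase X).erase Y)

/-- Every part of the partition `P` (i.e. every vertex of the corresponding trigraph)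
is incident to at most `d` red edges. -/
def RedDegLE {V : Type*} [Fintype V] [DecidableEq V] (G : SimpleGraph V)
    (P : Finpartition (Finset.univ : Finset V)) (d : ℕ) : Prop :=
  ∀ X ∈ P.parts, {Y | Y ∈ P.parts ∧ Y ≠ X ∧ ¬ Homogeneous G X Y}.ncard ≤ d

/-- `C` is a `d`-sequence of `G`: every trigraph in it has maximum red degree at most `d`. -/
def IsDSeq {V : Type*} [Fintype V] [DecidableEq V] (G : SimpleGraph V)
    (C : ContractionSeq V) (d : ℕ) : Prop :=
  ∀ i, 1 ≤ i → i ≤ Fintype.card V → RedDegLE G (C.parts i) d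

/-- The twin-width of `G`: the least `d` such that `G` has a `d`-sequence. -/
noncomputable def tww {V : Type*} [Fintype V] [DecidableEq V] (G : SimpleGraph V) : ℕ :=
  sInf {d | ∃ C : ContractionSeq V, IsDSeq G C d}

/-- `(σ, τ)` is a realiser of `G` as a permutation graph. -/
def IsRealiser {V : Type*} [Fintype V] (G : SimpleGraph V)
    (σ τ : V ≃ Fin (Fintype.card V)) : Prop :=
  ∀ u v : V, G.Adj u v ↔ ((σ u < σ v ∧ τ v < τ u) ∨ (σ v < σ u ∧ τ u < τ v))

/-- `G` is a permutation graph. -/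
def IsPermutationGraph {V : Type*} [Fintype V] (G : SimpleGraph V) : Prop :=
  ∃ σ τ : V ≃ Fin (Fintype.card V), IsRealiser G σ τ

/-- `I` is an interval for the ordering `σ` (its image is a set of consecutive integers,
equivalently it is convex). -/
def IsIntervalFor {V : Type*} {n : ℕ} (σ : V ≃ Fin n) (I : Set V) : Prop :=
  ∀ u v w : V, u ∈ I → w ∈ I → σ u ≤ σ v → σ v ≤ σ w → v ∈ I

/-- `M` is a module of `G`. -/
def IsModule {V : Type*} (G : SimpleGraph V) (M : Set V) : Prop :=
  ∀ v ∉ M, (∀ m ∈ M, G.Adj v m) ∨ (∀ m ∈ M, ¬ G.Adj v m)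

/-- `G` is prime (w.r.t. modules): all its modules are trivial. -/
def IsPrimeGraph {V : Type*} (G : SimpleGraph V) : Prop :=
  ∀ M : Set V, IsModule G M → M.Subsingleton ∨ M = Set.univ

/-- `M` is a strong module of `G`. -/
def IsStrongModule {V : Type*} (G : SimpleGraph V) (M : Set V) : Prop :=
  IsModule G M ∧ ∀ M' : Set V, IsModule G M' → M ⊆ M' ∨ M' ⊆ M ∨ M ∩ M' = ∅

/-- The underlying graph of the trigraph corresponding to the partition `P` in a
contraction sequence of `G`: parts `X ≠ Y` are adjacent (by a black or red edge)
iff some edge of `G` joins them. -/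
def QuotientGraph {V : Type*} [Fintype V] [DecidableEq V] (G : SimpleGraph V)
    (P : Finpartition (Finset.univ : Finset V)) :
    SimpleGraph {X : Finset V // X ∈ P.parts} where
  Adj X Y := X ≠ Y ∧ ∃ x ∈ X.1, ∃ y ∈ Y.1, G.Adj x y
  symm := by
    constructor
    rintro X Y ⟨hne, x, hx, y, hy, hadj⟩
    exact ⟨hne.symm, y, hy, x, hx, hadj.symm⟩
  loopless := by constructor; rintro X ⟨hne, -⟩; exact hne rfl

/-- `w` lies strictly between `a` and `b` in the ordering `σ`. -/
def StrictlyBetween {V : Type*} {n : ℕ} (σ : V ≃ Fin n) (a w b : V) : Prop :=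
  (σ a < σ w ∧ σ w < σ b) ∨ (σ b < σ w ∧ σ w < σ a)

/-- `G` is distance-hereditary. -/
def DistanceHereditary {V : Type*} (G : SimpleGraph V) : Prop :=
  ∀ S : Set V, (G.induce S).Connected →
    ∀ u v : S, (G.induce S).dist u v = G.dist ↑u ↑v

/-- There is a path from `a` to `b` in `G` containing no vertex equal or adjacent to `c`. -/
def AvoidingPath {V : Type*} (G : SimpleGraph V) (a b c : V) : Prop :=
  ∃ w : G.Walk a b, w.IsPath ∧ ∀ v ∈ w.support, v ≠ c ∧ ¬ G.Adj c v

/-- `x, y, z` form an asteroidal triple of `G`. -/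
def AsteroidalTriple {V : Type*} (G : SimpleGraph V) (x y z : V) : Prop :=
  x ≠ y ∧ y ≠ z ∧ x ≠ z ∧
    AvoidingPath G x y z ∧ AvoidingPath G y z x ∧ AvoidingPath G x z y

/-- `G` is asteroidal triple-free. -/
def ATFree {V : Type*} (G : SimpleGraph V) : Prop :=
  ∀ x y z : V, ¬ AsteroidalTriple G x y z

/-- `G` is a cograph: it has no induced path on four vertices. -/
def IsCograph {V : Type*} (G : SimpleGraph V) : Prop :=
  IsEmpty (SimpleGraph.pathGraph 4 ↪g G)

/-!
Going down the sequence from `G_1` to `G_n`, we maintain rational positions of the parts in two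
linear orders that realise the underlying graph of the current trigraph as a permutation graph and
in which the ends of every red edge are consecutive. When a part `Z` is split into `X` and `Y`, one
of them keeps the positions of `Z`. As `Z` has at most one red neighbour `W`, and `W` at most one
red neighbour among `X` and `Y`, the other one can be placed right next to `Z` in both orders, or,
if it is anticomplete to `W`, right beyond `W` in an order in which `Z` and `W` are consecutive.
At `G_n` the positions of the singletons define the realiser `(σ, τ)` of `G`, and the
representative of a part is the vertex that eventually inherits its positions.
-/

open Function

theorem Set.mem_uIoo_iff {β : Type*} [LinearOrder β] {a b x : β} :
    x ∈ Set.uIoo a b ↔ (a < x ∧ x < b) ∨ (b < x ∧ x < a) := by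
  rw [Set.uIoo_eq_union]; rfl

section Positions

variable {α β : Type*}

def Crosses [LT β] (f g : α → β) (a b : α) : Prop :=
  (f a < f b ∧ g b < g a) ∨ (f b < f a ∧ g a < g b)

def Consecutive [LinearOrder β] (s : Set α) (f : α → β) (a b : α) : Prop :=
  ∀ w ∈ s, f w ∉ Set.uIoo (f a) (f b)

theorem crosses_comm [LT β] {f g : α → β} {a b : α} : Crosses f g a b ↔ Crosses f g b a := by
  unfold Crosses; tauto

theorem crosses_swap [LT β] {f g : α → β} {a b : α} : Crosses g f a b ↔ Crosses f g a b := by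
  unfold Crosses; tauto

variable [LinearOrder β] {f : α → β} {s : Set α} {a b : α}

theorem Consecutive.symm (h : Consecutive s f a b) : Consecutive s f b a := by
  simpa only [Consecutive, Set.uIoo_comm] using h

theorem Consecutive.of_forall_exists_eq {α' : Type*} {f' : α' → β} {t : Set α'} {a' b' : α'}
    (h : Consecutive s f a b) (hts : ∀ w ∈ t, ∃ v ∈ s, f' w = f v) (ha : f' a' = f a)
    (hb : f' b' = f b) : Consecutive t f' a' b' := by
  intro w hw
  obtain ⟨v, hv, hwv⟩ := hts w hw
  rw [ha, hb, hwv]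
  exact h v hv

end Positions

section Negation

variable {α : Type*} {f g : α → ℚ} {s : Set α} {a b : α}

theorem crosses_neg : Crosses (-f) (-g) a b ↔ Crosses f g a b := by
  simp only [Crosses, Pi.neg_apply, neg_lt_neg_iff]; tauto

theorem consecutive_neg : Consecutive s (-f) a b ↔ Consecutive s f a b := by
  simp only [Consecutive, Set.mem_uIoo_iff, Pi.neg_apply, neg_lt_neg_iff]
  exact forall₂_congr fun _ _ => by tauto

end Negation

section AdjacentValue

/-- `q` is a fresh value right next to `a`: no element of `s` other than `a` lies between
`a` and `q`. -/
def IsAdjacentValue (s : Finset ℚ) (a q : ℚ) : Prop :=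
  q ≠ a ∧ ∀ x ∈ s, x ≠ a → (x < q ↔ x < a) ∧ (q < x ↔ a < x)

variable {s : Finset ℚ} {a q x y : ℚ}

theorem IsAdjacentValue.lt_iff (h : IsAdjacentValue s a q) (hx : x ∈ s) (hxa : x ≠ a) :
    x < q ↔ x < a :=
  (h.2 x hx hxa).1

theorem IsAdjacentValue.gt_iff (h : IsAdjacentValue s a q) (hx : x ∈ s) (hxa : x ≠ a) :
    q < x ↔ a < x :=
  (h.2 x hx hxa).2

theorem IsAdjacentValue.ne (h : IsAdjacentValue s a q) (hx : x ∈ s) : x ≠ q := by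
  rintro rfl
  have := h.2 x hx h.1
  simp only [lt_self_iff_false, false_iff, not_lt] at this
  exact h.1 (le_antisymm this.2 this.1)

theorem IsAdjacentValue.lt_iff_and_gt_iff {α : Type*} {P : Finset α} {f : α → ℚ} {c u : α}
    (h : IsAdjacentValue (P.image f) (f c) q) (hf : Set.InjOn f P) (hu : u ∈ P) (hc : c ∈ P)
    (huc : u ≠ c) : (f u < q ↔ f u < f c) ∧ (q < f u ↔ f c < f u) :=
  h.2 _ (Finset.mem_image_of_mem f hu) (hf.ne hu hc huc)

theorem IsAdjacentValue.mem_uIoo_iff (h : IsAdjacentValue s a q) (hx : x ∈ s) (hy : y ∈ s)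
    (hxa : x ≠ a) (hya : y ≠ a) : q ∈ Set.uIoo x y ↔ a ∈ Set.uIoo x y := by
  simp only [Set.mem_uIoo_iff, h.lt_iff hx hxa, h.lt_iff hy hya, h.gt_iff hx hxa,
    h.gt_iff hy hya]

theorem exists_isAdjacentValue_gt (s : Finset ℚ) (a : ℚ) :
    ∃ q, a < q ∧ IsAdjacentValue s a q := by
  set t := insert (a + 1) (s.filter (a < ·))
  have ht : ∀ x ∈ t, a < x := by simp [t]
  set m := t.min' (Finset.insert_nonempty _ _)
  have ham : a < m := ht m (Finset.min'_mem _ _)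
  refine ⟨(a + m) / 2, by linarith, by linarith, fun x hx hxa => ?_⟩
  rcases lt_or_gt_of_ne hxa with hlt | hgt
  · constructor <;> constructor <;> intro <;> linarith
  · have : m ≤ x := Finset.min'_le _ _ (by simp [t, hx, hgt])
    constructor <;> constructor <;> intro <;> linarith

theorem exists_isAdjacentValue (s : Finset ℚ) (a : ℚ) (p : Prop) [Decidable p] :
    ∃ q, (a < q ↔ p) ∧ IsAdjacentValue s a q := by
  by_cases hp : p
  · obtain ⟨q, haq, hq⟩ := exists_isAdjacentValue_gt s a
    exact ⟨q, iff_of_true haq hp, hq⟩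
  · obtain ⟨q, haq, hne, hq⟩ := exists_isAdjacentValue_gt (s.image Neg.neg) (-a)
    refine ⟨-q, iff_of_false (by linarith) hp, by intro h; linarith [neg_eq_iff_eq_neg.1 h],
      fun x hx hxa => ?_⟩
    have := hq (-x) (Finset.mem_image_of_mem _ hx) (by simpa using hxa)
    simp only [neg_lt_neg_iff, neg_lt] at this
    rw [← this.1, ← this.2]
    constructor <;> constructor <;> intro <;> linarith

end AdjacentValue

section Parts

variable {V : Type*} {G : SimpleGraph V} {A B X Z U : Finset V}

variable (G) in
def QuotAdj (A B : Finset V) : Prop := ∃ a ∈ A, ∃ b ∈ B, G.Adj a b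

theorem quotAdj_comm : QuotAdj G A B ↔ QuotAdj G B A := by
  constructor <;> rintro ⟨a, ha, b, hb, hab⟩ <;> exact ⟨b, hb, a, ha, hab.symm⟩

theorem homogeneous_comm : Homogeneous G A B ↔ Homogeneous G B A := by
  unfold Homogeneous
  exact or_congr ⟨fun h b hb a ha => (h a ha b hb).symm, fun h a ha b hb => (h b hb a ha).symm⟩
    ⟨fun h b hb a ha hab => h a ha b hb hab.symm, fun h a ha b hb hab => h b hb a ha hab.symm⟩

theorem Homogeneous.mono_left (h : Homogeneous G Z U) (hXZ : X ⊆ Z) : Homogeneous G X U :=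
  h.imp (fun h x hx => h x (hXZ hx)) (fun h x hx => h x (hXZ hx))

theorem quotAdj_of_not_homogeneous (h : ¬ Homogeneous G A B) : QuotAdj G A B := by
  by_contra hn
  exact h (Or.inr fun a ha b hb hab => hn ⟨a, ha, b, hb, hab⟩)

theorem Homogeneous.quotAdj_iff_of_subset (h : Homogeneous G Z U) (hXZ : X ⊆ Z)
    (hX : X.Nonempty) (hU : U.Nonempty) : QuotAdj G X U ↔ QuotAdj G Z U := by
  obtain ⟨x, hx⟩ := hX
  obtain ⟨u, hu⟩ := hU
  rcases h with h | h
  · exact iff_of_true ⟨x, hx, u, hu, h x (hXZ hx) u hu⟩ ⟨x, hXZ hx, u, hu, h x (hXZ hx) u hu⟩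
  · exact iff_of_false (fun ⟨a, ha, b, hb, hab⟩ => h a (hXZ ha) b hb hab)
      (fun ⟨a, ha, b, hb, hab⟩ => h a ha b hb hab)

end Parts

theorem Finset.forall_mem_insert_pair {α : Type*} [DecidableEq α] {R : α → α → Prop}
    {x : α} {s : Finset α} (hsymm : ∀ a b, R a b → R b a) (hxx : R x x)
    (hx : ∀ b ∈ s, R x b) (hs : ∀ a ∈ s, ∀ b ∈ s, R a b) :
    ∀ a ∈ insert x s, ∀ b ∈ insert x s, R a b := by
  simp only [mem_insert, forall_eq_or_imp]
  exact ⟨⟨hxx, hx⟩, fun a ha => ⟨hsymm _ _ (hx a ha), hs a ha⟩⟩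

theorem consecutive_of_red_symm {V : Type*} {G : SimpleGraph V} {s : Set (Finset V)}
    {f g : Finset V → ℚ} {A B : Finset V}
    (h : A ≠ B → ¬ Homogeneous G A B → Consecutive s f A B ∨ Consecutive s g A B) :
    B ≠ A → ¬ Homogeneous G B A → Consecutive s f B A ∨ Consecutive s g B A :=
  fun hBA hr => (h hBA.symm (mt homogeneous_comm.1 hr)).imp Consecutive.symm Consecutive.symm

section Realiser

variable {V : Type*} {G : SimpleGraph V}

variable (G) in
/-- `f` and `g` give the positions of the parts `P` (the vertices of a trigraph of the
sequence) in the two orders of a realiser of its underlying graph, in which the ends of every red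
edge are consecutive. -/
structure IsQuotientRealiser (P : Finset (Finset V)) (f g : Finset V → ℚ) : Prop where
  injOn_left : Set.InjOn f P
  injOn_right : Set.InjOn g P
  quotAdj_iff : ∀ A ∈ P, ∀ B ∈ P, A ≠ B → (QuotAdj G A B ↔ Crosses f g A B)
  consecutive_of_red : ∀ A ∈ P, ∀ B ∈ P, A ≠ B → ¬ Homogeneous G A B →
    Consecutive (P : Set (Finset V)) f A B ∨ Consecutive (P : Set (Finset V)) g A B

variable {P : Finset (Finset V)} {f g : Finset V → ℚ}

namespace IsQuotientRealiser

theorem swap (h : IsQuotientRealiser G P f g) : IsQuotientRealiser G P g f where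
  injOn_left := h.injOn_right
  injOn_right := h.injOn_left
  quotAdj_iff A hA B hB hAB := (h.quotAdj_iff A hA B hB hAB).trans crosses_swap.symm
  consecutive_of_red A hA B hB hAB hr := (h.consecutive_of_red A hA B hB hAB hr).symm

theorem neg (h : IsQuotientRealiser G P f g) : IsQuotientRealiser G P (-f) (-g) where
  injOn_left := neg_injective.comp_injOn h.injOn_left
  injOn_right := neg_injective.comp_injOn h.injOn_right
  quotAdj_iff A hA B hB hAB := (h.quotAdj_iff A hA B hB hAB).trans crosses_neg.symm
  consecutive_of_red A hA B hB hAB hr := by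
    simpa only [consecutive_neg] using h.consecutive_of_red A hA B hB hAB hr

theorem of_card_le_one (hP : #P ≤ 1) : IsQuotientRealiser G P f g := by
  have hP := card_le_one.1 hP
  exact ⟨fun A hA B hB _ => hP A hA B hB, fun A hA B hB _ => hP A hA B hB,
    fun A hA B hB hAB => absurd (hP A hA B hB) hAB,
    fun A hA B hB hAB => absurd (hP A hA B hB) hAB⟩

end IsQuotientRealiser

end Realiser

section Insert

variable {V : Type*} [DecidableEq V] {P : Finset (Finset V)} {f g : Finset V → ℚ}
  {A B C X Y : Finset V} {q r : ℚ}

theorem Consecutive.insert_update (h : Consecutive (P : Set (Finset V)) f A B) (hA : A ≠ Y)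
    (hB : B ≠ Y) (hq : q ∉ Set.uIoo (f A) (f B)) :
    Consecutive (insert Y P : Finset (Finset V)) (update f Y q) A B := by
  simp only [Consecutive, coe_insert, Set.mem_insert_iff, forall_eq_or_imp, update_self,
    update_of_ne hA, update_of_ne hB]
  refine ⟨hq, fun W hW => ?_⟩
  rcases eq_or_ne W Y with rfl | hWY
  · simpa using hq
  · rw [update_of_ne hWY]; exact h W hW

theorem Consecutive.insert_update_of_isAdjacentValue (h : Consecutive (P : Set (Finset V)) f A B)
    (hf : Set.InjOn f P) (hq : IsAdjacentValue (P.image f) (f C) q) (hA : A ∈ P) (hB : B ∈ P)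
    (hC : C ∈ P) (hCA : C ≠ A) (hCB : C ≠ B) (hY : Y ∉ P) :
    Consecutive (insert Y P : Finset (Finset V)) (update f Y q) A B :=
  h.insert_update (ne_of_mem_of_not_mem hA hY) (ne_of_mem_of_not_mem hB hY)
    ((hq.mem_uIoo_iff (mem_image_of_mem f hA) (mem_image_of_mem f hB)
      (hf.ne hA hC hCA.symm) (hf.ne hB hC hCB.symm)).not.2 (h C hC))

theorem consecutive_insert_update_of_isAdjacentValue (hf : Set.InjOn f P)
    (hq : IsAdjacentValue (P.image f) (f X) q) (hX : X ∈ P) (hY : Y ∉ P) :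
    Consecutive (insert Y P : Finset (Finset V)) (update f Y q) Y X := by
  simp only [Consecutive, coe_insert, Set.mem_insert_iff, forall_eq_or_imp, update_self,
    update_of_ne (ne_of_mem_of_not_mem hX hY), Set.left_notMem_uIoo, not_false_eq_true,
    true_and]
  intro W hW
  rw [update_of_ne (ne_of_mem_of_not_mem hW hY), Set.mem_uIoo_iff]
  rcases eq_or_ne W X with rfl | hWX
  · simp
  rw [(hq.lt_iff_and_gt_iff hf hW hX hWX).1, (hq.lt_iff_and_gt_iff hf hW hX hWX).2]
  rintro (⟨h1, h2⟩ | ⟨h1, h2⟩) <;> exact lt_asymm h1 h2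

theorem Set.InjOn.update_insert (hf : Set.InjOn f P) (hY : Y ∉ P) (hq : ∀ U ∈ P, f U ≠ q) :
    Set.InjOn (update f Y q) (insert Y P : Finset (Finset V)) := by
  rw [coe_insert, Set.injOn_insert (by simpa using hY), update_self]
  refine ⟨hf.congr fun U hU => (update_of_ne (ne_of_mem_of_not_mem hU hY) _ _).symm, ?_⟩
  rintro ⟨U, hU, hUq⟩
  rw [update_of_ne (ne_of_mem_of_not_mem hU hY)] at hUq
  exact hq U hU hUq

theorem crosses_update_iff (hY : A ≠ Y) (hf : (f A < q ↔ f A < f X) ∧ (q < f A ↔ f X < f A))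
    (hg : (g A < r ↔ g A < g X) ∧ (r < g A ↔ g X < g A)) :
    Crosses (update f Y q) (update g Y r) Y A ↔ Crosses f g X A := by
  simp only [Crosses, update_self, update_of_ne hY, hf.1, hf.2, hg.1, hg.2]

theorem crosses_update_iff_of_side {p : Prop} (hXY : X ≠ Y) (hq : q ≠ f X) (hr : r ≠ g X)
    (hside : g X < r ↔ (q < f X ↔ p)) : Crosses (update f Y q) (update g Y r) Y X ↔ p := by
  simp only [Crosses, update_self, update_of_ne hXY]
  rcases lt_or_gt_of_ne hq with h1 | h1 <;> rcases lt_or_gt_of_ne hr with h2 | h2 <;> grind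

end Insert

section Realiser

variable {V : Type*} {G : SimpleGraph V} {P Q : Finset (Finset V)} {f g : Finset V → ℚ}

theorem IsQuotientRealiser.mono (h : IsQuotientRealiser G P f g) (hQ : Q ⊆ P) :
    IsQuotientRealiser G Q f g where
  injOn_left := h.injOn_left.mono (by simpa using hQ)
  injOn_right := h.injOn_right.mono (by simpa using hQ)
  quotAdj_iff A hA B hB := h.quotAdj_iff A (hQ hA) B (hQ hB)
  consecutive_of_red A hA B hB hAB hr := (h.consecutive_of_red A (hQ hA) B (hQ hB) hAB hr).imp
    (fun hc w hw => hc w (hQ hw)) (fun hc w hw => hc w (hQ hw))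

variable [DecidableEq V] {Y : Finset V} {q r : ℚ}

theorem IsQuotientRealiser.insert_update (h : IsQuotientRealiser G P f g) (hY : Y ∉ P)
    (hq : ∀ U ∈ P, f U ≠ q) (hr : ∀ U ∈ P, g U ≠ r)
    (hadj : ∀ U ∈ P, QuotAdj G Y U ↔ Crosses (update f Y q) (update g Y r) Y U)
    (hred : ∀ A ∈ insert Y P, ∀ B ∈ insert Y P, A ≠ B → ¬ Homogeneous G A B →
      Consecutive (insert Y P : Finset (Finset V)) (update f Y q) A B ∨
        Consecutive (insert Y P : Finset (Finset V)) (update g Y r) A B) :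
    IsQuotientRealiser G (insert Y P) (update f Y q) (update g Y r) where
  injOn_left := h.injOn_left.update_insert hY hq
  injOn_right := h.injOn_right.update_insert hY hr
  quotAdj_iff := by
    refine forall_mem_insert_pair (fun A B hAB hBA => ?_) (fun h => absurd rfl h)
      (fun U hU _ => hadj U hU) (fun A hA B hB hAB => ?_)
    · exact quotAdj_comm.trans ((hAB hBA.symm).trans crosses_comm)
    · rw [h.quotAdj_iff A hA B hB hAB]
      simp only [Crosses, update_of_ne (ne_of_mem_of_not_mem hA hY),
        update_of_ne (ne_of_mem_of_not_mem hB hY)]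
  consecutive_of_red := hred

end Realiser

section Replace

variable {V : Type*} [DecidableEq V] {G : SimpleGraph V} {O : Finset (Finset V)}
  {f g : Finset V → ℚ} {X Z : Finset V}

theorem Consecutive.replace {A B A' B' : Finset V}
    (h : Consecutive (insert Z O : Finset (Finset V)) f A B) (hXO : X ∉ O)
    (hA : update f X (f Z) A' = f A) (hB : update f X (f Z) B' = f B) :
    Consecutive (insert X O : Finset (Finset V)) (update f X (f Z)) A' B' := by
  refine h.of_forall_exists_eq ?_ hA hB
  simp only [coe_insert, Set.mem_insert_iff, forall_eq_or_imp, update_self]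
  exact ⟨⟨Z, Or.inl rfl, rfl⟩, fun W hW =>
    ⟨W, Or.inr hW, update_of_ne (ne_of_mem_of_not_mem hW hXO) _ _⟩⟩

/-- A subset of a part has no red edge that the part did not have. -/
theorem IsQuotientRealiser.replace (h : IsQuotientRealiser G (insert Z O) f g) (hZO : Z ∉ O)
    (hXO : X ∉ O) (hXZ : X ⊆ Z) (hadj : ∀ U ∈ O, QuotAdj G X U ↔ QuotAdj G Z U) :
    IsQuotientRealiser G (insert X O) (update f X (f Z)) (update g X (g Z)) := by
  have hZ : Z ∈ insert Z O := mem_insert_self Z O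
  have hupd : ∀ (k : Finset V → ℚ), ∀ U ∈ O, update k X (k Z) U = k U :=
    fun k U hU => update_of_ne (ne_of_mem_of_not_mem hU hXO) _ _
  have hconsZ : ∀ U ∈ O, ¬ Homogeneous G X U →
      Consecutive (insert X O : Finset (Finset V)) (update f X (f Z)) X U ∨
        Consecutive (insert X O : Finset (Finset V)) (update g X (g Z)) X U := by
    intro U hU hXU
    have hZU : ¬ Homogeneous G Z U := fun hh => hXU (hh.mono_left hXZ)
    exact (h.consecutive_of_red Z hZ U (mem_insert_of_mem hU) (ne_of_mem_of_not_mem hU hZO).symm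
      hZU).imp (·.replace hXO (update_self ..) (hupd f U hU))
      (·.replace hXO (update_self ..) (hupd g U hU))
  refine (h.mono (subset_insert Z O)).insert_update hXO
    (fun U hU e => hZO (h.injOn_left (mem_insert_of_mem hU) hZ e ▸ hU))
    (fun U hU e => hZO (h.injOn_right (mem_insert_of_mem hU) hZ e ▸ hU))
    (fun U hU => (hadj U hU).trans ((h.quotAdj_iff Z hZ U (mem_insert_of_mem hU)
      (ne_of_mem_of_not_mem hU hZO).symm).trans (crosses_update_iff (ne_of_mem_of_not_mem hU hXO)
        ⟨Iff.rfl, Iff.rfl⟩ ⟨Iff.rfl, Iff.rfl⟩).symm))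
    (forall_mem_insert_pair (fun _ _ => consecutive_of_red_symm) (fun h => absurd rfl h)
      (fun U hU _ => hconsZ U hU) fun A hA B hB hAB hr => ?_)
  exact (h.consecutive_of_red A (mem_insert_of_mem hA) B (mem_insert_of_mem hB) hAB hr).imp
    (·.replace hXO (hupd f A hA) (hupd f B hB))
    (·.replace hXO (hupd g A hA) (hupd g B hB))

end Replace

theorem lt_iff_of_not_mem_uIoo {β : Type*} [LinearOrder β] {a b x : β} (hab : a < b)
    (hx : x ∉ Set.uIoo a b) (hxa : x ≠ a) (hxb : x ≠ b) :
    (x < b ↔ x < a) ∧ (b < x ↔ a < x) := by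
  rw [Set.mem_uIoo_iff] at hx
  rcases lt_or_gt_of_ne hxa with h1 | h1 <;> rcases lt_or_gt_of_ne hxb with h2 | h2
  · exact ⟨iff_of_true h2 h1, iff_of_false (by order) (by order)⟩
  · order
  · exact absurd (Or.inl ⟨h1, h2⟩) hx
  · exact ⟨iff_of_false (by order) (by order), iff_of_true h2 h1⟩

theorem IsAdjacentValue.lt_iff_and_gt_iff_of_consecutive {α : Type*} {P : Finset α}
    {f : α → ℚ} {q : ℚ} {U X W : α} (hq : IsAdjacentValue (P.image f) (f W) q)
    (hf : Set.InjOn f P) (hcons : Consecutive (P : Set α) f X W) (hXW : f X < f W) (hU : U ∈ P)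
    (hX : X ∈ P) (hW : W ∈ P) (hUX : U ≠ X) (hUW : U ≠ W) :
    (f U < q ↔ f U < f X) ∧ (q < f U ↔ f X < f U) := by
  rw [(hq.lt_iff_and_gt_iff hf hU hW hUW).1, (hq.lt_iff_and_gt_iff hf hU hW hUW).2]
  exact lt_iff_of_not_mem_uIoo hXW (hcons U hU) (hf.ne hU hX hUX) (hf.ne hU hW hUW)

section Scenarios

variable {V : Type*} [DecidableEq V] {G : SimpleGraph V} {O : Finset (Finset V)}
  {f g : Finset V → ℚ} {X Y W : Finset V} {q r : ℚ}

theorem IsQuotientRealiser.insert_update_next (h : IsQuotientRealiser G (insert X O) f g)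
    (hXO : X ∉ O) (hYO : Y ∉ O) (hXY : X ≠ Y) (hq : ∀ U ∈ insert X O, f U ≠ q)
    (hr : IsAdjacentValue ((insert X O).image g) (g X) r)
    (hadj : ∀ U ∈ insert X O, QuotAdj G Y U ↔ Crosses (update f Y q) (update g Y r) Y U)
    (hhom : ∀ U ∈ O, Homogeneous G Y U)
    (hredX : ∀ U ∈ O, ¬ Homogeneous G X U →
      Consecutive (insert Y (insert X O) : Finset (Finset V)) (update f Y q) X U)
    (hredO : ∀ A ∈ O, ∀ B ∈ O, A ≠ B → ¬ Homogeneous G A B →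
      Consecutive (insert X O : Finset (Finset V)) f A B → q ∉ Set.uIoo (f A) (f B)) :
    IsQuotientRealiser G (insert Y (insert X O)) (update f Y q) (update g Y r) ∧
      Consecutive (insert Y (insert X O) : Finset (Finset V)) (update g Y r) Y X := by
  have hX : X ∈ insert X O := mem_insert_self X O
  have hYP : Y ∉ insert X O := by simp [hXY.symm, hYO]
  have hUX : ∀ U ∈ O, X ≠ U := fun U hU => (ne_of_mem_of_not_mem hU hXO).symm
  have hUY : ∀ U ∈ O, U ≠ Y := fun U hU => ne_of_mem_of_not_mem hU hYO
  have hYX := consecutive_insert_update_of_isAdjacentValue h.injOn_right hr hX hYP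
  refine ⟨h.insert_update hYP hq (fun U hU => hr.ne (mem_image_of_mem g hU)) hadj
    (forall_mem_insert_pair (fun _ _ => consecutive_of_red_symm) (fun h => absurd rfl h)
      (fun B hB _ hYr => ?_) (forall_mem_insert_pair (fun _ _ => consecutive_of_red_symm)
        (fun h => absurd rfl h) (fun U hU _ hXr => Or.inl (hredX U hU hXr))
        fun A hA B hB hAB hAr => ?_)), hYX⟩
  · rcases mem_insert.1 hB with rfl | hB
    exacts [Or.inr hYX, absurd (hhom B hB) hYr]
  · exact (h.consecutive_of_red A (mem_insert_of_mem hA) B (mem_insert_of_mem hB) hAB hAr).imp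
      (fun hc => hc.insert_update (hUY A hA) (hUY B hB) (hredO A hA B hB hAB hAr hc))
      (·.insert_update_of_isAdjacentValue h.injOn_right hr (mem_insert_of_mem hA)
        (mem_insert_of_mem hB) hX (hUX A hA) (hUX B hB) hYP)

/-- `Y` is placed next to `X` in both orders, below it in `f`. -/
theorem exists_insert_twin (h : IsQuotientRealiser G (insert X O) f g) (hXO : X ∉ O)
    (hYO : Y ∉ O) (hXY : X ≠ Y) (htwin : ∀ U ∈ O, QuotAdj G Y U ↔ QuotAdj G X U)
    (hhom : ∀ U ∈ O, Homogeneous G Y U)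
    (hred : ∀ U ∈ O, ¬ Homogeneous G X U →
      f X < f U ∧ Consecutive (insert X O : Finset (Finset V)) f X U) :
    ∃ q r, IsQuotientRealiser G (insert Y (insert X O)) (update f Y q) (update g Y r) ∧
      Consecutive (insert Y (insert X O) : Finset (Finset V)) (update g Y r) Y X := by
  classical
  have hX : X ∈ insert X O := mem_insert_self X O
  have hUX : ∀ U ∈ O, U ≠ X := fun U hU => ne_of_mem_of_not_mem hU hXO
  obtain ⟨q, hqX, hq⟩ := exists_isAdjacentValue ((insert X O).image f) (f X) False
  obtain ⟨r, hrX, hr⟩ :=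
    exists_isAdjacentValue ((insert X O).image g) (g X) (q < f X ↔ QuotAdj G Y X)
  have hqX : q < f X := lt_of_le_of_ne (not_lt.1 (hqX.not.2 id)) hq.1
  refine ⟨q, r, h.insert_update_next hXO hYO hXY (fun U hU => hq.ne (mem_image_of_mem f hU)) hr
    ((forall_mem_insert ..).2 ⟨?_, fun U hU => ?_⟩) hhom (fun U hU hXr => ?_)
    (fun A hA B hB _ _ hc => ?_)⟩
  · exact (crosses_update_iff_of_side hXY hq.1 hr.1 hrX).symm
  · have hU' : U ∈ insert X O := mem_insert_of_mem hU
    rw [htwin U hU, h.quotAdj_iff X hX U hU' (hUX U hU).symm,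
      crosses_update_iff (ne_of_mem_of_not_mem hU hYO)
        (hq.lt_iff_and_gt_iff h.injOn_left hU' hX (hUX U hU))
        (hr.lt_iff_and_gt_iff h.injOn_right hU' hX (hUX U hU))]
  · obtain ⟨hlt, hc⟩ := hred U hU hXr
    refine hc.insert_update hXY (ne_of_mem_of_not_mem hU hYO) ?_
    rw [Set.mem_uIoo_iff]
    rintro (⟨h1, h2⟩ | ⟨h1, h2⟩) <;> order
  · exact (hq.mem_uIoo_iff (mem_image_of_mem f (mem_insert_of_mem hA))
      (mem_image_of_mem f (mem_insert_of_mem hB))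
      (h.injOn_left.ne (mem_insert_of_mem hA) hX (hUX A hA))
      (h.injOn_left.ne (mem_insert_of_mem hB) hX (hUX B hB))).not.2 (hc X hX)

/-- `Y` is placed just beyond `W` in `f` and next to `X` in `g`. -/
theorem exists_insert_beyond (h : IsQuotientRealiser G (insert X O) f g) (hXO : X ∉ O)
    (hYO : Y ∉ O) (hXY : X ≠ Y) (hW : W ∈ O) (hXW : f X < f W)
    (hconsXW : Consecutive (insert X O : Finset (Finset V)) f X W) (hadjXW : QuotAdj G X W)
    (hadjYW : ¬ QuotAdj G Y W) (htwin : ∀ U ∈ O, U ≠ W → (QuotAdj G Y U ↔ QuotAdj G X U))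
    (hhom : ∀ U ∈ O, Homogeneous G Y U) (hredX : ∀ U ∈ O, ¬ Homogeneous G X U → U = W)
    (hredW : ∀ U ∈ O, U ≠ W → Homogeneous G W U) :
    ∃ q r, IsQuotientRealiser G (insert Y (insert X O)) (update f Y q) (update g Y r) ∧
      Consecutive (insert Y (insert X O) : Finset (Finset V)) (update g Y r) Y X := by
  classical
  have hX : X ∈ insert X O := mem_insert_self X O
  have hW' : W ∈ insert X O := mem_insert_of_mem hW
  have hUX : ∀ U ∈ O, U ≠ X := fun U hU => ne_of_mem_of_not_mem hU hXO
  obtain ⟨q, hWq, hq⟩ := exists_isAdjacentValue ((insert X O).image f) (f W) True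
  obtain ⟨r, hrX, hr⟩ :=
    exists_isAdjacentValue ((insert X O).image g) (g X) (q < f X ↔ QuotAdj G Y X)
  have hWq : f W < q := hWq.2 trivial
  have hgWX : g W < g X := by
    rcases (h.quotAdj_iff X hX W hW' (hUX W hW).symm).1 hadjXW with ⟨-, h⟩ | ⟨h, -⟩
    · exact h
    · order
  refine ⟨q, r, h.insert_update_next hXO hYO hXY (fun U hU => hq.ne (mem_image_of_mem f hU)) hr
    ((forall_mem_insert ..).2 ⟨?_, fun U hU => ?_⟩) hhom (fun U hU hXr => ?_)
    (fun A hA B hB hAB hAr hc => ?_)⟩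
  · exact (crosses_update_iff_of_side hXY (by order) hr.1 hrX).symm
  · have hU' : U ∈ insert X O := mem_insert_of_mem hU
    have hcutg := hr.lt_iff_and_gt_iff h.injOn_right hU' hX (hUX U hU)
    rcases eq_or_ne U W with rfl | hUW
    · refine iff_of_false hadjYW ?_
      simp only [Crosses, update_self, update_of_ne (ne_of_mem_of_not_mem hU hYO), hcutg.1,
        hcutg.2]
      rintro (⟨h1, -⟩ | ⟨-, h2⟩) <;> order
    rw [htwin U hU hUW, h.quotAdj_iff X hX U hU' (hUX U hU).symm,
      crosses_update_iff (ne_of_mem_of_not_mem hU hYO) (hq.lt_iff_and_gt_iff_of_consecutive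
        h.injOn_left hconsXW hXW hU' hX hW' (hUX U hU) hUW) hcutg]
  · obtain rfl := hredX U hU hXr
    refine hconsXW.insert_update hXY (ne_of_mem_of_not_mem hU hYO) ?_
    rw [Set.mem_uIoo_iff]
    rintro (⟨h1, h2⟩ | ⟨h1, h2⟩) <;> order
  · have hAW : A ≠ W := fun e => hAr (e ▸ hredW B hB (e ▸ hAB).symm)
    have hBW : B ≠ W := fun e => hAr (homogeneous_comm.1 (e ▸ hredW A hA (e ▸ hAB)))
    exact (hq.mem_uIoo_iff (mem_image_of_mem f (mem_insert_of_mem hA))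
      (mem_image_of_mem f (mem_insert_of_mem hB))
      (h.injOn_left.ne (mem_insert_of_mem hA) hW' hAW)
      (h.injOn_left.ne (mem_insert_of_mem hB) hW' hBW)).not.2 (hc W hW')

end Scenarios

section SplitRealiser

variable {V : Type*} {G : SimpleGraph V} {P P' : Finset (Finset V)} {f g : Finset V → ℚ}
  {X Y : Finset V}

variable (G) in
def AtMostOneRedNeighbour (P : Finset (Finset V)) : Prop :=
  ∀ A ∈ P, ∀ B ∈ P, ∀ C ∈ P, A ≠ B → A ≠ C → ¬ Homogeneous G A B → ¬ Homogeneous G A C → B = C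

theorem AtMostOneRedNeighbour.homogeneous (hP : AtMostOneRedNeighbour G P) {A B C : Finset V}
    (hA : A ∈ P) (hB : B ∈ P) (hC : C ∈ P) (hAB : A ≠ B) (hAC : A ≠ C) (hBC : B ≠ C)
    (hr : ¬ Homogeneous G A B) : Homogeneous G A C :=
  by_contra fun hr' => hBC (hP A hA B hB C hC hAB hAC hr hr')

variable (G) in
def HasSplitRealiser (P P' : Finset (Finset V)) (X Y : Finset V) (f g : Finset V → ℚ) : Prop :=
  ∃ f' g', IsQuotientRealiser G P' f' g' ∧
    (∀ A ∈ P, ∃ D ∈ P', D ⊆ A ∧ f' D = f A ∧ g' D = g A) ∧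
    (Consecutive (P' : Set (Finset V)) f' X Y ∨ Consecutive (P' : Set (Finset V)) g' X Y)

namespace HasSplitRealiser

theorem symm (h : HasSplitRealiser G P P' Y X f g) : HasSplitRealiser G P P' X Y f g :=
  let ⟨f', g', hr, hD, hc⟩ := h
  ⟨f', g', hr, hD, hc.imp Consecutive.symm Consecutive.symm⟩

theorem of_swap (h : HasSplitRealiser G P P' X Y g f) : HasSplitRealiser G P P' X Y f g :=
  let ⟨f', g', hr, hD, hc⟩ := h
  ⟨g', f', hr.swap, fun A hA => (hD A hA).imp fun _ ⟨hDP, hDA, hf, hg⟩ => ⟨hDP, hDA, hg, hf⟩,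
    hc.symm⟩

theorem of_neg (h : HasSplitRealiser G P P' X Y (-f) (-g)) : HasSplitRealiser G P P' X Y f g :=
  let ⟨f', g', hr, hD, hc⟩ := h
  ⟨-f', -g', hr.neg, fun A hA => (hD A hA).imp fun _ ⟨hDP, hDA, hf, hg⟩ =>
      ⟨hDP, hDA, by simp [hf], by simp [hg]⟩,
    by simpa only [consecutive_neg] using hc⟩

end HasSplitRealiser

end SplitRealiser

section Split

variable {V : Type*} [DecidableEq V] {G : SimpleGraph V} {O : Finset (Finset V)}
  {f g : Finset V → ℚ} {X Y : Finset V}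

structure IsSplit (O : Finset (Finset V)) (X Y : Finset V) : Prop where
  left_not_mem : X ∉ O
  right_not_mem : Y ∉ O
  union_not_mem : X ∪ Y ∉ O
  ne : X ≠ Y
  left_nonempty : X.Nonempty
  right_nonempty : Y.Nonempty
  nonempty : ∀ U ∈ O, U.Nonempty

theorem IsSplit.symm (hs : IsSplit O X Y) : IsSplit O Y X :=
  ⟨hs.2, hs.1, union_comm X Y ▸ hs.3, hs.4.symm, hs.6, hs.5, hs.7⟩

theorem hasSplitRealiser_of_insert {q r : ℚ} (hs : IsSplit O X Y)
    (h : IsQuotientRealiser G (insert Y (insert X O))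
      (update (update f X (f (X ∪ Y))) Y q) (update (update g X (g (X ∪ Y))) Y r))
    (hc : Consecutive (insert Y (insert X O) : Finset (Finset V))
      (update (update g X (g (X ∪ Y))) Y r) Y X) :
    HasSplitRealiser G (insert (X ∪ Y) O) (insert X (insert Y O)) X Y f g := by
  rw [insert_comm]
  refine ⟨_, _, h, (forall_mem_insert ..).2 ⟨⟨X, by simp, subset_union_left, ?_⟩,
    fun U hU => ⟨U, by simp [hU], subset_rfl, ?_⟩⟩, Or.inr hc.symm⟩
  · simp [update_of_ne hs.ne]
  · simp [update_of_ne (ne_of_mem_of_not_mem hU hs.left_not_mem),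
      update_of_ne (ne_of_mem_of_not_mem hU hs.right_not_mem)]

end Split

section Step

variable {V : Type*} [DecidableEq V] {G : SimpleGraph V} {O : Finset (Finset V)}
  {f g : Finset V → ℚ} {X Y Z W : Finset V}

theorem quotAdj_and_homogeneous_or_of_not_homogeneous_union
    (hZW : ¬ Homogeneous G (X ∪ Y) W) (hXY : Homogeneous G X W ∨ Homogeneous G Y W) :
    (QuotAdj G X W ∧ Homogeneous G Y W) ∨ (QuotAdj G Y W ∧ Homogeneous G X W) := by
  have hanti : ∀ {A}, ¬ QuotAdj G A W → ∀ a ∈ A, ∀ w ∈ W, ¬ G.Adj a w :=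
    fun hA a ha w hw hadj => hA ⟨a, ha, w, hw, hadj⟩
  by_cases hYW : Homogeneous G Y W
  · by_cases hXW : QuotAdj G X W
    · exact Or.inl ⟨hXW, hYW⟩
    refine Or.inr ⟨by_contra fun hYW' => hZW (Or.inr fun a ha w hw => ?_), Or.inr (hanti hXW)⟩
    rcases mem_union.1 ha with ha | ha
    exacts [hanti hXW a ha w hw, hanti hYW' a ha w hw]
  · exact Or.inr ⟨quotAdj_of_not_homogeneous hYW, hXY.resolve_right hYW⟩

theorem hasSplitRealiser_of_forall_homogeneous (h : IsQuotientRealiser G (insert (X ∪ Y) O) f g)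
    (hs : IsSplit O X Y) (hZ : ∀ U ∈ O, Homogeneous G (X ∪ Y) U) :
    HasSplitRealiser G (insert (X ∪ Y) O) (insert X (insert Y O)) X Y f g := by
  have hadj : ∀ {X'}, X' ⊆ X ∪ Y → X'.Nonempty → ∀ U ∈ O,
      (QuotAdj G X' U ↔ QuotAdj G (X ∪ Y) U) := fun hsub hne U hU =>
    (hZ U hU).quotAdj_iff_of_subset hsub hne (hs.nonempty U hU)
  obtain ⟨q, r, h', hc⟩ := exists_insert_twin
    (h.replace hs.union_not_mem hs.left_not_mem subset_union_left
      (hadj subset_union_left hs.left_nonempty))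
    hs.left_not_mem hs.right_not_mem hs.ne
    (fun U hU => (hadj subset_union_right hs.right_nonempty U hU).trans
      (hadj subset_union_left hs.left_nonempty U hU).symm)
    (fun U hU => (hZ U hU).mono_left subset_union_right)
    (fun U hU hr => absurd ((hZ U hU).mono_left subset_union_left) hr)
  exact hasSplitRealiser_of_insert hs h' hc

theorem hasSplitRealiser_of_quotAdj_of_homogeneous (h : IsQuotientRealiser G (insert Z O) f g)
    (hs : IsSplit O X Y) (hZ : X ∪ Y = Z) (hW : W ∈ O) (hZW : ¬ Homogeneous G Z W)
    (hZhom : ∀ U ∈ O, U ≠ W → Homogeneous G Z U) (hWhom : ∀ U ∈ O, U ≠ W → Homogeneous G W U)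
    (hlt : f Z < f W) (hcons : Consecutive (insert Z O : Finset (Finset V)) f Z W)
    (hXW : QuotAdj G X W) (hYW : Homogeneous G Y W) :
    HasSplitRealiser G (insert Z O) (insert X (insert Y O)) X Y f g := by
  subst hZ
  have hadj : ∀ {X'}, X' ⊆ X ∪ Y → X'.Nonempty → ∀ U ∈ O, U ≠ W →
      (QuotAdj G X' U ↔ QuotAdj G (X ∪ Y) U) := fun hsub hne U hU hUW =>
    (hZhom U hU hUW).quotAdj_iff_of_subset hsub hne (hs.nonempty U hU)
  have hadjX : ∀ U ∈ O, QuotAdj G X U ↔ QuotAdj G (X ∪ Y) U := fun U hU => by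
    rcases eq_or_ne U W with rfl | hUW
    · exact iff_of_true hXW (quotAdj_of_not_homogeneous hZW)
    · exact hadj subset_union_left hs.left_nonempty U hU hUW
  have hf₁W : update f X (f (X ∪ Y)) W = f W :=
    update_of_ne (ne_of_mem_of_not_mem hW hs.left_not_mem) _ _
  have hlt₁ : update f X (f (X ∪ Y)) X < update f X (f (X ∪ Y)) W := by
    rwa [update_self, hf₁W]
  have hcons₁ := hcons.replace hs.left_not_mem (update_self ..) hf₁W
  have hredX : ∀ U ∈ O, ¬ Homogeneous G X U → U = W := fun U hU hr => by_contra fun hUW =>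
    hr ((hZhom U hU hUW).mono_left subset_union_left)
  have hhom : ∀ U ∈ O, Homogeneous G Y U := fun U hU => by
    rcases eq_or_ne U W with rfl | hUW
    exacts [hYW, (hZhom U hU hUW).mono_left subset_union_right]
  have htwin : ∀ U ∈ O, U ≠ W → (QuotAdj G Y U ↔ QuotAdj G X U) := fun U hU hUW =>
    (hadj subset_union_right hs.right_nonempty U hU hUW).trans (hadjX U hU).symm
  have h₁ := h.replace hs.union_not_mem hs.left_not_mem subset_union_left hadjX
  by_cases hYW' : QuotAdj G Y W
  · obtain ⟨q, r, h', hc⟩ := exists_insert_twin h₁ hs.left_not_mem hs.right_not_mem hs.ne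
      (fun U hU => by
        rcases eq_or_ne U W with rfl | hUW
        exacts [iff_of_true hYW' hXW, htwin U hU hUW])
      hhom (fun U hU hr => by obtain rfl := hredX U hU hr; exact ⟨hlt₁, hcons₁⟩)
    exact hasSplitRealiser_of_insert hs h' hc
  · obtain ⟨q, r, h', hc⟩ := exists_insert_beyond h₁ hs.left_not_mem hs.right_not_mem hs.ne hW
      hlt₁ hcons₁ hXW hYW' htwin hhom hredX hWhom
    exact hasSplitRealiser_of_insert hs h' hc

theorem hasSplitRealiser_of_red_of_lt (h : IsQuotientRealiser G (insert (X ∪ Y) O) f g)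
    (hs : IsSplit O X Y) (hP : AtMostOneRedNeighbour G (insert (X ∪ Y) O))
    (hP' : AtMostOneRedNeighbour G (insert X (insert Y O))) (hW : W ∈ O)
    (hZW : ¬ Homogeneous G (X ∪ Y) W) (hlt : f (X ∪ Y) < f W)
    (hcons : Consecutive (insert (X ∪ Y) O : Finset (Finset V)) f (X ∪ Y) W) :
    HasSplitRealiser G (insert (X ∪ Y) O) (insert X (insert Y O)) X Y f g := by
  have hZP := mem_insert_self (X ∪ Y) O
  have hWP : W ∈ insert (X ∪ Y) O := mem_insert_of_mem hW
  have hZU : ∀ U ∈ O, X ∪ Y ≠ U := fun U hU => (ne_of_mem_of_not_mem hU hs.union_not_mem).symm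
  have hZhom : ∀ U ∈ O, U ≠ W → Homogeneous G (X ∪ Y) U := fun U hU hUW =>
    hP.homogeneous hZP hWP (mem_insert_of_mem hU) (hZU W hW) (hZU U hU) hUW.symm hZW
  have hWhom : ∀ U ∈ O, U ≠ W → Homogeneous G W U := fun U hU hUW =>
    hP.homogeneous hWP hZP (mem_insert_of_mem hU) (hZU W hW).symm hUW.symm (hZU U hU)
      (mt homogeneous_comm.1 hZW)
  have hXY : Homogeneous G X W ∨ Homogeneous G Y W := or_iff_not_imp_left.2 fun hXW =>
    by_contra fun hYW => hs.ne (hP' W (by simp [hW]) X (by simp) Y (by simp)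
      (ne_of_mem_of_not_mem hW hs.left_not_mem) (ne_of_mem_of_not_mem hW hs.right_not_mem)
      (mt homogeneous_comm.1 hXW) (mt homogeneous_comm.1 hYW))
  rcases quotAdj_and_homogeneous_or_of_not_homogeneous_union hZW hXY with
    ⟨hXW, hYW⟩ | ⟨hYW, hXW⟩
  · exact hasSplitRealiser_of_quotAdj_of_homogeneous h hs rfl hW hZW hZhom hWhom hlt hcons hXW
      hYW
  · rw [insert_comm]
    exact (hasSplitRealiser_of_quotAdj_of_homogeneous h hs.symm (union_comm Y X) hW hZW hZhom
      hWhom hlt hcons hYW hXW).symm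

theorem hasSplitRealiser_of_red (h : IsQuotientRealiser G (insert (X ∪ Y) O) f g)
    (hs : IsSplit O X Y) (hP : AtMostOneRedNeighbour G (insert (X ∪ Y) O))
    (hP' : AtMostOneRedNeighbour G (insert X (insert Y O))) (hW : W ∈ O)
    (hZW : ¬ Homogeneous G (X ∪ Y) W) :
    HasSplitRealiser G (insert (X ∪ Y) O) (insert X (insert Y O)) X Y f g := by
  have hZP := mem_insert_self (X ∪ Y) O
  have hWP : W ∈ insert (X ∪ Y) O := mem_insert_of_mem hW
  have hZW' : X ∪ Y ≠ W := (ne_of_mem_of_not_mem hW hs.union_not_mem).symm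
  have key : ∀ {f g : Finset V → ℚ}, IsQuotientRealiser G (insert (X ∪ Y) O) f g →
      Consecutive (insert (X ∪ Y) O : Finset (Finset V)) f (X ∪ Y) W →
      HasSplitRealiser G (insert (X ∪ Y) O) (insert X (insert Y O)) X Y f g := by
    intro f g h hcons
    rcases lt_or_gt_of_ne fun e => hZW' (h.injOn_left hZP hWP e) with hlt | hgt
    · exact hasSplitRealiser_of_red_of_lt h hs hP hP' hW hZW hlt hcons
    · exact (hasSplitRealiser_of_red_of_lt h.neg hs hP hP' hW hZW (neg_lt_neg hgt)
        (consecutive_neg.2 hcons)).of_neg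
  rcases h.consecutive_of_red _ hZP W hWP hZW' hZW with hcons | hcons
  exacts [key h hcons, (key h.swap hcons).of_swap]

theorem hasSplitRealiser (h : IsQuotientRealiser G (insert (X ∪ Y) O) f g)
    (hs : IsSplit O X Y) (hP : AtMostOneRedNeighbour G (insert (X ∪ Y) O))
    (hP' : AtMostOneRedNeighbour G (insert X (insert Y O))) :
    HasSplitRealiser G (insert (X ∪ Y) O) (insert X (insert Y O)) X Y f g := by
  by_cases hred : ∃ W ∈ O, ¬ Homogeneous G (X ∪ Y) W
  · obtain ⟨W, hW, hZW⟩ := hred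
    exact hasSplitRealiser_of_red h hs hP hP' hW hZW
  · push Not at hred
    exact hasSplitRealiser_of_forall_homogeneous h hs hred

end Step

section Partitions

variable {V : Type*} [Fintype V] [DecidableEq V] {G : SimpleGraph V}
  {P P' : Finpartition (univ : Finset V)} {f g : Finset V → ℚ} {X Y : Finset V}

def IsRefinement (P P' : Finset (Finset V)) (f g f' g' : Finset V → ℚ) : Prop :=
  (∀ A ∈ P, ∃ D ∈ P', D ⊆ A ∧ f' D = f A ∧ g' D = g A) ∧
    ∀ X ∈ P', ∀ Y ∈ P', X ≠ Y → X ∪ Y ∈ P →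
      Consecutive (P' : Set (Finset V)) f' X Y ∨ Consecutive (P' : Set (Finset V)) g' X Y

theorem RedDegLE.atMostOneRedNeighbour (hP : RedDegLE G P 1) :
    AtMostOneRedNeighbour G P.parts := by
  intro A hA B hB C hC hAB hAC hrB hrC
  by_contra hBC
  have hfin : {D | D ∈ P.parts ∧ D ≠ A ∧ ¬ Homogeneous G A D}.Finite :=
    P.parts.finite_toSet.subset fun D hD => hD.1
  exact absurd (hP A hA) (not_le.2 ((Set.one_lt_ncard_iff hfin).2
    ⟨B, C, ⟨hB, hAB.symm, hrB⟩, ⟨hC, hAC.symm, hrC⟩, hBC⟩))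

theorem Finpartition.eq_of_subset_of_mem_parts {A B : Finset V} (hA : A ∈ P.parts)
    (hB : B ∈ P.parts) (hAB : A ⊆ B) : A = B :=
  let ⟨_, ha⟩ := P.nonempty_of_mem_parts hA
  P.eq_of_mem_parts hA hB ha (hAB ha)

theorem isSplit_of_merge (hX : X ∈ P'.parts) (hY : Y ∈ P'.parts) (hXY : X ≠ Y) :
    IsSplit ((P'.parts.erase X).erase Y) X Y := by
  refine ⟨by simp, by simp, fun hZ => hXY ?_, hXY, P'.nonempty_of_mem_parts hX,
    P'.nonempty_of_mem_parts hY, fun U hU => P'.nonempty_of_mem_parts (by simp_all)⟩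
  have hZ : X ∪ Y ∈ P'.parts := mem_of_mem_erase (mem_of_mem_erase hZ)
  exact (P'.eq_of_subset_of_mem_parts hX hZ subset_union_left).trans
    (P'.eq_of_subset_of_mem_parts hY hZ subset_union_right).symm

theorem eq_or_eq_of_union_mem_merge (hX : X ∈ P'.parts) (hY : Y ∈ P'.parts)
    (hmerge : P.parts = insert (X ∪ Y) ((P'.parts.erase X).erase Y))
    {X' Y' : Finset V} (hX' : X' ∈ P'.parts) (hY' : Y' ∈ P'.parts) (hXY' : X' ≠ Y')
    (hU : X' ∪ Y' ∈ P.parts) : (X' = X ∧ Y' = Y) ∨ (X' = Y ∧ Y' = X) := by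
  rw [hmerge, mem_insert] at hU
  rcases hU with hU | hU
  · have hsub : ∀ {A}, A ∈ P'.parts → A ⊆ X ∪ Y → A = X ∨ A = Y := by
      intro A hA hAU
      obtain ⟨a, ha⟩ := P'.nonempty_of_mem_parts hA
      rcases mem_union.1 (hAU ha) with h | h
      exacts [Or.inl (P'.eq_of_mem_parts hA hX ha h), Or.inr (P'.eq_of_mem_parts hA hY ha h)]
    rcases hsub hX' (hU ▸ subset_union_left) with rfl | rfl <;>
    rcases hsub hY' (hU ▸ subset_union_right) with rfl | rfl <;> simp_all
  · have hU := mem_of_mem_erase (mem_of_mem_erase hU)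
    exact absurd ((P'.eq_of_subset_of_mem_parts hX' hU subset_union_left).trans
      (P'.eq_of_subset_of_mem_parts hY' hU subset_union_right).symm) hXY'

theorem exists_realiser_of_merge (hP : RedDegLE G P 1) (hP' : RedDegLE G P' 1)
    (hX : X ∈ P'.parts) (hY : Y ∈ P'.parts) (hXY : X ≠ Y)
    (hmerge : P.parts = insert (X ∪ Y) ((P'.parts.erase X).erase Y))
    (h : IsQuotientRealiser G P.parts f g) :
    ∃ f' g', IsQuotientRealiser G P'.parts f' g' ∧ IsRefinement P.parts P'.parts f g f' g' := by
  have hP'eq : P'.parts = insert X (insert Y ((P'.parts.erase X).erase Y)) := by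
    rw [insert_erase (mem_erase.2 ⟨hXY.symm, hY⟩), insert_erase hX]
  have hsplit := hasSplitRealiser (hmerge ▸ h) (isSplit_of_merge hX hY hXY)
    (hmerge ▸ hP.atMostOneRedNeighbour) (hP'eq ▸ hP'.atMostOneRedNeighbour)
  rw [← hmerge, ← hP'eq] at hsplit
  obtain ⟨f', g', hr, hD, hc⟩ := hsplit
  refine ⟨f', g', hr, hD, fun X' hX' Y' hY' hXY' hU => ?_⟩
  rcases eq_or_eq_of_union_mem_merge hX hY hmerge hX' hY' hXY' hU with ⟨rfl, rfl⟩ | ⟨rfl, rfl⟩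
  exacts [hc, hc.imp Consecutive.symm Consecutive.symm]

end Partitions

theorem exists_seq_of_forall_exists {α : Type*} (p : ℕ → α → Prop) (R : ℕ → α → α → Prop)
    (h₀ : ∃ a, p 0 a) (hstep : ∀ n a, p n a → ∃ b, p (n + 1) b ∧ R n a b) :
    ∃ s : ℕ → α, ∀ n, p n (s n) ∧ R n (s n) (s (n + 1)) := by
  choose a₀ ha₀ using h₀
  choose next hnext using hstep
  let t : (n : ℕ) → {a // p n a} := fun n =>
    Nat.rec ⟨a₀, ha₀⟩ (fun n x => ⟨next n x.1 x.2, (hnext n x.1 x.2).1⟩) n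
  exact ⟨fun n => (t n).1, fun n => ⟨(t n).2, (hnext n _ (t n).2).2⟩⟩

theorem exists_equiv_fin_lt_iff {W β : Type*} [Fintype W] [LinearOrder β] (key : W → β)
    (hkey : Injective key) : ∃ σ : W ≃ Fin (Fintype.card W), ∀ u v, σ u < σ v ↔ key u < key v := by
  let _ : LinearOrder W := LinearOrder.lift' key hkey
  exact ⟨(monoEquivOfFin W rfl).symm.toEquiv, fun u v => (monoEquivOfFin W rfl).symm.lt_iff_lt⟩

section Sequence

variable {V : Type*} [Fintype V] [DecidableEq V] {G : SimpleGraph V} {C : ContractionSeq V}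
  {F Gs : ℕ → Finset V → ℚ}

theorem ContractionSeq.singleton_mem_parts (C : ContractionSeq V) (v : V) :
    {v} ∈ (C.parts (Fintype.card V)).parts := by
  obtain ⟨t, ht, hvt⟩ := (C.parts (Fintype.card V)).exists_mem (mem_univ v)
  obtain ⟨a, rfl⟩ := card_eq_one.1 (C.parts_top t ht)
  rwa [mem_singleton.1 hvt]

variable (G) in
structure IsRealiserSeq (C : ContractionSeq V) (F Gs : ℕ → Finset V → ℚ) : Prop where
  realiser : ∀ i, 1 ≤ i → i ≤ Fintype.card V →
    IsQuotientRealiser G (C.parts i).parts (F i) (Gs i)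
  isRefinement : ∀ i, 1 ≤ i → i < Fintype.card V → IsRefinement (C.parts i).parts
    (C.parts (i + 1)).parts (F i) (Gs i) (F (i + 1)) (Gs (i + 1))

theorem exists_isRealiserSeq (hC : IsDSeq G C 1) : ∃ F Gs, IsRealiserSeq G C F Gs := by
  let Good : ℕ → (Finset V → ℚ) × (Finset V → ℚ) → Prop := fun i a =>
    1 ≤ i → i ≤ Fintype.card V → IsQuotientRealiser G (C.parts i).parts a.1 a.2
  let Next : ℕ → (Finset V → ℚ) × (Finset V → ℚ) → (Finset V → ℚ) × (Finset V → ℚ) → Prop :=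
    fun i a b => 1 ≤ i → i < Fintype.card V →
      IsRefinement (C.parts i).parts (C.parts (i + 1)).parts a.1 a.2 b.1 b.2
  have hstep : ∀ i a, Good i a → ∃ b, Good (i + 1) b ∧ Next i a b := by
    intro i a ha
    rcases Nat.eq_zero_or_pos i with rfl | hi
    · exact ⟨0, fun _ hn => .of_card_le_one (C.parts_card 1 le_rfl hn).le,
        fun h => absurd h (by omega)⟩
    by_cases hin : i < Fintype.card V
    · obtain ⟨X, hX, Y, hY, hXY, hmerge⟩ := C.merge i hi hin
      obtain ⟨f', g', hr, hD⟩ :=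
        exists_realiser_of_merge (hC i hi hin.le) (hC (i + 1) (by omega) hin) hX hY hXY hmerge
          (ha hi hin.le)
      exact ⟨(f', g'), fun _ _ => hr, fun _ _ => hD⟩
    · exact ⟨a, fun _ h => absurd h (by omega), fun _ h => absurd h hin⟩
  obtain ⟨s, hs⟩ := exists_seq_of_forall_exists Good Next ⟨0, fun h => absurd h (by omega)⟩ hstep
  exact ⟨fun i => (s i).1, fun i => (s i).2,
    ⟨fun i hi hin => (hs i).1 hi hin, fun i hi hin => (hs i).2 hi hin⟩⟩

theorem IsRealiserSeq.exists_mem_eq (hseq : IsRealiserSeq G C F Gs) {i : ℕ} (hi : 1 ≤ i)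
    (hin : i ≤ Fintype.card V) {A : Finset V} (hA : A ∈ (C.parts i).parts) :
    ∃ v ∈ A, F (Fintype.card V) {v} = F i A ∧ Gs (Fintype.card V) {v} = Gs i A := by
  induction hin using Nat.decreasingInduction generalizing A with
  | self =>
    obtain ⟨v, rfl⟩ := card_eq_one.1 (C.parts_top A hA)
    exact ⟨v, mem_singleton_self v, rfl, rfl⟩
  | of_succ k hk ih =>
    obtain ⟨D, hD, hDA, hf, hg⟩ := (hseq.isRefinement k hi hk).1 A hA
    obtain ⟨v, hv, hfv, hgv⟩ := ih (by omega) hD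
    exact ⟨v, hDA hv, hfv.trans hf, hgv.trans hg⟩

end Sequence

section Representatives

variable {V : Type*} [Fintype V] [DecidableEq V] {G : SimpleGraph V}
  {P : Finpartition (univ : Finset V)} {f g : Finset V → ℚ} {σ τ : V ≃ Fin (Fintype.card V)}
  {r : {X : Finset V // X ∈ P.parts} → V}

theorem Finpartition.injective_of_mem (hr : ∀ X, r X ∈ X.1) : Injective r :=
  fun X Y hXY => Subtype.ext (P.eq_of_mem_parts X.2 Y.2 (hr X) (hXY ▸ hr Y))

theorem IsQuotientRealiser.quotientGraph_adj_iff (h : IsQuotientRealiser G P.parts f g)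
    (hreal : IsRealiser G σ τ)
    (hσ : ∀ X Y, σ (r X) < σ (r Y) ↔ f X < f Y) (hτ : ∀ X Y, τ (r X) < τ (r Y) ↔ g X < g Y)
    (X Y : {X : Finset V // X ∈ P.parts}) :
    (QuotientGraph G P).Adj X Y ↔ G.Adj (r X) (r Y) := by
  rcases eq_or_ne X Y with rfl | hXY
  · simp
  have hXY' : X.1 ≠ Y.1 := fun e => hXY (Subtype.ext e)
  change X ≠ Y ∧ QuotAdj G X.1 Y.1 ↔ _
  rw [and_iff_right hXY, h.quotAdj_iff X.1 X.2 Y.1 Y.2 hXY', hreal]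
  simp only [Crosses, hσ, hτ]

theorem not_strictlyBetween_of_consecutive (hσ : ∀ X Y, σ (r X) < σ (r Y) ↔ f X < f Y)
    {X Y : {X : Finset V // X ∈ P.parts}} (h : Consecutive (P.parts : Set (Finset V)) f X Y)
    (W : {X : Finset V // X ∈ P.parts}) : ¬ StrictlyBetween σ (r X) (r W) (r Y) := by
  simpa only [StrictlyBetween, hσ, Set.mem_uIoo_iff] using h W.1 W.2

variable {C : ContractionSeq V} {F Gs : ℕ → Finset V → ℚ}

theorem IsRealiserSeq.exists_isRealiser (hseq : IsRealiserSeq G C F Gs) :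
    ∃ σ τ : V ≃ Fin (Fintype.card V), IsRealiser G σ τ ∧ ∀ u v,
      (σ u < σ v ↔ F (Fintype.card V) {u} < F (Fintype.card V) {v}) ∧
        (τ u < τ v ↔ Gs (Fintype.card V) {u} < Gs (Fintype.card V) {v}) := by
  set n := Fintype.card V
  have htop : ∀ v : V, IsQuotientRealiser G (C.parts n).parts (F n) (Gs n) := fun v =>
    hseq.realiser n (Fintype.card_pos_iff.2 ⟨v⟩) le_rfl
  obtain ⟨σ, hσ⟩ := exists_equiv_fin_lt_iff (fun v => F n {v}) fun u v e =>
    singleton_injective ((htop u).injOn_left (C.singleton_mem_parts u) (C.singleton_mem_parts v) e)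
  obtain ⟨τ, hτ⟩ := exists_equiv_fin_lt_iff (fun v => Gs n {v}) fun u v e =>
    singleton_injective ((htop u).injOn_right (C.singleton_mem_parts u) (C.singleton_mem_parts v) e)
  refine ⟨σ, τ, fun u v => ?_, fun u v => ⟨hσ u v, hτ u v⟩⟩
  rcases eq_or_ne u v with rfl | huv
  · simp
  have hadj : G.Adj u v ↔ QuotAdj G {u} {v} := by simp [QuotAdj]
  rw [hadj, (htop u).quotAdj_iff _ (C.singleton_mem_parts u) _ (C.singleton_mem_parts v)
    (by simpa using huv), Crosses, hσ, hσ, hτ, hτ]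

theorem IsRealiserSeq.exists_representatives (hseq : IsRealiserSeq G C F Gs) :
    ∃ (σ τ : V ≃ Fin (Fintype.card V)) (r : ∀ i : ℕ, {X : Finset V // X ∈ (C.parts i).parts} → V),
      IsRealiser G σ τ ∧ (∀ i X, r i X ∈ X.1) ∧ ∀ i, 1 ≤ i → i ≤ Fintype.card V → ∀ X Y,
        (σ (r i X) < σ (r i Y) ↔ F i X < F i Y) ∧ (τ (r i X) < τ (r i Y) ↔ Gs i X < Gs i Y) := by
  obtain ⟨σ, τ, hreal, hστ⟩ := hseq.exists_isRealiser
  have hrep : ∀ i (X : {X : Finset V // X ∈ (C.parts i).parts}), ∃ v ∈ X.1,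
      1 ≤ i → i ≤ Fintype.card V →
        F (Fintype.card V) {v} = F i X ∧ Gs (Fintype.card V) {v} = Gs i X := by
    intro i X
    by_cases hi : 1 ≤ i ∧ i ≤ Fintype.card V
    · obtain ⟨v, hv, hfv⟩ := hseq.exists_mem_eq hi.1 hi.2 X.2
      exact ⟨v, hv, fun _ _ => hfv⟩
    · obtain ⟨v, hv⟩ := (C.parts i).nonempty_of_mem_parts X.2
      exact ⟨v, hv, fun h1 h2 => absurd ⟨h1, h2⟩ hi⟩
  choose r hr hrv using hrep
  refine ⟨σ, τ, r, hreal, hr, fun i hi hin X Y => ?_⟩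
  rw [(hστ _ _).1, (hστ _ _).2, (hrv i X hi hin).1, (hrv i Y hi hin).1, (hrv i X hi hin).2,
    (hrv i Y hi hin).2]
  exact ⟨Iff.rfl, Iff.rfl⟩

end Representatives

/-- Given a 1-contraction sequence of `G`, there are a realiser `(σ, τ)` of
`G` and, for each `i`, an injective system of representatives `r_i` of the parts of `G_i`
inducing the underlying graph of `G_i` as an induced subgraph of `G`, such that the two
vertices contracted at each step, as well as the endpoints of every red edge, are
consecutive for the induced realiser. -/
theorem stmt_7 {V : Type*} [Fintype V] [DecidableEq V] (G : SimpleGraph V)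
    (C : ContractionSeq V) (hC : IsDSeq G C 1) :
    ∃ σ τ : V ≃ Fin (Fintype.card V), IsRealiser G σ τ ∧
      ∃ r : ∀ i : ℕ, {X : Finset V // X ∈ (C.parts i).parts} → V,
        -- (i) representatives, injectivity, and induced-subgraph isomorphism
        (∀ i, 1 ≤ i → i ≤ Fintype.card V →
          Function.Injective (r i) ∧
          (∀ X, r i X ∈ X.1) ∧
          (∀ X Y, (QuotientGraph G (C.parts i)).Adj X Y ↔ G.Adj (r i X) (r i Y))) ∧
        -- (ii) the two vertices of `G_i` contracted to form `G_{i-1}` are consecutive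
        (∀ i, 2 ≤ i → i ≤ Fintype.card V →
          ∀ X Y : {X : Finset V // X ∈ (C.parts i).parts}, X ≠ Y →
            X.1 ∪ Y.1 ∈ (C.parts (i - 1)).parts →
            ((∀ W, W ≠ X → W ≠ Y → ¬ StrictlyBetween σ (r i X) (r i W) (r i Y)) ∨
             (∀ W, W ≠ X → W ≠ Y → ¬ StrictlyBetween τ (r i X) (r i W) (r i Y)))) ∧
        -- (iii) endpoints of red edges of `G_i` are consecutive
        (∀ i, 1 ≤ i → i ≤ Fintype.card V →
          ∀ X Y : {X : Finset V // X ∈ (C.parts i).parts}, X ≠ Y →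
            ¬ Homogeneous G X.1 Y.1 →
            ((∀ W, W ≠ X → W ≠ Y → ¬ StrictlyBetween σ (r i X) (r i W) (r i Y)) ∨
             (∀ W, W ≠ X → W ≠ Y → ¬ StrictlyBetween τ (r i X) (r i W) (r i Y)))) := by
  obtain ⟨F, Gs, hseq⟩ := exists_isRealiserSeq hC
  obtain ⟨σ, τ, r, hreal, hr, hord⟩ := hseq.exists_representatives
  have hcons : ∀ i, 1 ≤ i → i ≤ Fintype.card V → ∀ X Y : {X // X ∈ (C.parts i).parts},
      Consecutive ((C.parts i).parts : Set (Finset V)) (F i) X Y ∨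
        Consecutive ((C.parts i).parts : Set (Finset V)) (Gs i) X Y →
      (∀ W, W ≠ X → W ≠ Y → ¬ StrictlyBetween σ (r i X) (r i W) (r i Y)) ∨
        (∀ W, W ≠ X → W ≠ Y → ¬ StrictlyBetween τ (r i X) (r i W) (r i Y)) :=
    fun i hi hin X Y h => h.imp
      (fun h W _ _ => not_strictlyBetween_of_consecutive (fun X Y => (hord i hi hin X Y).1) h W)
      (fun h W _ _ => not_strictlyBetween_of_consecutive (fun X Y => (hord i hi hin X Y).2) h W)
  refine ⟨σ, τ, hreal, r, fun i hi hin => ⟨Finpartition.injective_of_mem (hr i), hr i,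
    (hseq.realiser i hi hin).quotientGraph_adj_iff hreal (fun X Y => (hord i hi hin X Y).1)
      (fun X Y => (hord i hi hin X Y).2)⟩, fun i hi hin X Y hXY hU => ?_,
    fun i hi hin X Y hXY hred => hcons i (by omega) hin X Y
      ((hseq.realiser i (by omega) hin).consecutive_of_red X.1 X.2 Y.1 Y.2
        (fun e => hXY (Subtype.ext e)) hred)⟩
  obtain ⟨k, rfl⟩ : ∃ k, i = k + 1 := ⟨i - 1, by omega⟩
  exact hcons (k + 1) (by omega) hin X Y ((hseq.isRefinement k (by omega) (by omega)).2
    X.1 X.2 Y.1 Y.2 (fun e => hXY (Subtype.ext e)) hU)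
end

section
/- Let G be a prime graph on at least 4 vertices, let G_n, …, G_1 be a 1-contraction sequence of G, and let s be a vertex of G such that for every i with 3 ≤ i ≤ n, the part of G_i containing s is incident to no red edge of G_i. Then for every i with 4 ≤ i ≤ n, the parts of the two vertices of G_i contracted to form G_{i-1} are either both subsets of N_G(s) or both subsets of V(G) ∖ N_G[s]. -/
open Finset

/-! The part of `s` is homogeneous to every other part, so it is a module; primality forces
it to be `{s}` as long as at least two parts remain. At stage `i - 1 ≥ 3` the merged part
`X ∪ Y` has at least two vertices, so it is not `{s}`, and its homogeneity with `{s}` places it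
entirely inside `N(s)` or entirely outside `N[s]`. -/

section

variable {V : Type*} {G : SimpleGraph V}

lemma homogeneous_singleton_left_iff {s : V} {X : Finset V} :
    Homogeneous G {s} X ↔ (∀ x ∈ X, G.Adj s x) ∨ ∀ x ∈ X, ¬ G.Adj s x := by
  simp only [Homogeneous, mem_singleton, forall_eq]

variable [DecidableEq V]

lemma union_ne_singleton_of_ne {X Y : Finset V} (hX : X.Nonempty) (hY : Y.Nonempty)
    (hXY : X ≠ Y) (s : V) : X ∪ Y ≠ {s} := by
  intro h
  rw [hX.subset_singleton_iff.mp (h ▸ subset_union_left),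
    hY.subset_singleton_iff.mp (h ▸ subset_union_right)] at hXY
  exact hXY rfl

variable [Fintype V] {P : Finpartition (univ : Finset V)} {A : Finset V}

lemma isModule_of_forall_homogeneous (hA : A ∈ P.parts)
    (h : ∀ B ∈ P.parts, B ≠ A → Homogeneous G A B) : IsModule G (A : Set V) := by
  intro v hv
  obtain ⟨B, hB, hvB⟩ := P.exists_mem (mem_univ v)
  have hBA : B ≠ A := by rintro rfl; exact hv hvB
  rcases h B hB hBA with hadj | hnadj
  · exact Or.inl fun a ha => (hadj a ha v hvB).symm
  · exact Or.inr fun a ha hva => hnadj a ha v hvB hva.symm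

lemma IsPrimeGraph.part_eq_singleton_of_isModule (hG : IsPrimeGraph G) (hP : 1 < #P.parts)
    (hA : A ∈ P.parts) (hmod : IsModule G (A : Set V)) {a : V} (ha : a ∈ A) : A = {a} := by
  rcases hG _ hmod with hsub | huniv
  · exact eq_singleton_iff_unique_mem.mpr ⟨ha, fun x hx => hsub hx ha⟩
  · obtain ⟨B, hB, hBA⟩ := exists_mem_ne hP A
    obtain ⟨b, hb⟩ := P.nonempty_of_mem_parts hB
    have hbA : b ∈ (A : Set V) := huniv ▸ Set.mem_univ b
    exact absurd (P.eq_of_mem_parts hB hA hb hbA) hBA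

end

theorem stmt_9_general {V : Type*} [Fintype V] [DecidableEq V] (G : SimpleGraph V)
    (hprime : IsPrimeGraph G)
    (C : ContractionSeq V) (s : V)
    (hs : ∀ i, 3 ≤ i → i ≤ Fintype.card V → ∀ X ∈ (C.parts i).parts, s ∈ X →
      ∀ Y ∈ (C.parts i).parts, Y ≠ X → Homogeneous G X Y)
    (i : ℕ) (hi4 : 4 ≤ i) (hin : i ≤ Fintype.card V)
    (X Y : Finset V) (hX : X ∈ (C.parts i).parts) (hY : Y ∈ (C.parts i).parts)
    (hXY : X ≠ Y) (hmerge : X ∪ Y ∈ (C.parts (i - 1)).parts) :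
    ((∀ x ∈ X, G.Adj s x) ∧ (∀ y ∈ Y, G.Adj s y)) ∨
    ((∀ x ∈ X, x ≠ s ∧ ¬ G.Adj s x) ∧ (∀ y ∈ Y, y ≠ s ∧ ¬ G.Adj s y)) := by
  have hi3 : 3 ≤ i - 1 := by omega
  have hin' : i - 1 ≤ Fintype.card V := by omega
  set P := C.parts (i - 1)
  obtain ⟨S, hS, hsS⟩ := P.exists_mem (mem_univ s)
  have hS_eq : S = {s} := by
    refine hprime.part_eq_singleton_of_isModule ?_ hS
      (isModule_of_forall_homogeneous hS (hs _ hi3 hin' S hS hsS)) hsS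
    rw [C.parts_card _ (by omega) hin']
    omega
  subst hS_eq
  have hne : X ∪ Y ≠ {s} := union_ne_singleton_of_ne
    ((C.parts i).nonempty_of_mem_parts hX) ((C.parts i).nonempty_of_mem_parts hY) hXY s
  have hsXY : s ∉ X ∪ Y := fun h => hne (P.eq_of_mem_parts hmerge hS h (mem_singleton_self s))
  rcases homogeneous_singleton_left_iff.mp (hs _ hi3 hin' {s} hS hsS (X ∪ Y) hmerge hne)
    with hadj | hnadj
  · exact Or.inl (forall_mem_union.mp hadj)
  · exact Or.inr (forall_mem_union.mp fun z hz => ⟨ne_of_mem_of_not_mem hz hsXY, hnadj z hz⟩)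

/-- Let `G` be prime on at least 4 vertices with a 1-contraction sequence,
and `s` a vertex whose part is never incident to a red edge in any `G_i`, `3 ≤ i ≤ n`.
Then for `4 ≤ i ≤ n`, the two parts merged from `G_i` to `G_{i-1}` are both contained in
`N_G(s)` or both contained in `V(G) ∖ N_G[s]`. -/
theorem stmt_9 {V : Type*} [Fintype V] [DecidableEq V] (G : SimpleGraph V)
    (hprime : IsPrimeGraph G) (h4 : 4 ≤ Fintype.card V)
    (C : ContractionSeq V) (hC : IsDSeq G C 1) (s : V)
    (hs : ∀ i, 3 ≤ i → i ≤ Fintype.card V → ∀ X ∈ (C.parts i).parts, s ∈ X →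
      ∀ Y ∈ (C.parts i).parts, Y ≠ X → Homogeneous G X Y)
    (i : ℕ) (hi4 : 4 ≤ i) (hin : i ≤ Fintype.card V)
    (X Y : Finset V) (hX : X ∈ (C.parts i).parts) (hY : Y ∈ (C.parts i).parts)
    (hXY : X ≠ Y) (hmerge : X ∪ Y ∈ (C.parts (i - 1)).parts) :
    ((∀ x ∈ X, G.Adj s x) ∧ (∀ y ∈ Y, G.Adj s y)) ∨
    ((∀ x ∈ X, x ≠ s ∧ ¬ G.Adj s x) ∧ (∀ y ∈ Y, y ≠ s ∧ ¬ G.Adj s y)) :=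
  stmt_9_general G hprime C s hs i hi4 hin X Y hX hY hXY hmerge
end
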